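/- arXiv:2009.04377 — 2 statements merged into one kernel-verified Lean document; each statement's English description precedes it below -/
import Mathlib

section
/- Let κ be a regular cardinal, X ⊆ Y infinite sets, and l = (Fm_Σ(X), ⊢) a logic of cardinality κ. Then there exists a natural extension of l to Fm_Σ(Y): a logic ⊢' on Fm_Σ(Y) of cardinality κ such that for all Γ ∪ {φ} ⊆ Fm_Σ(X) (regarded inside Fm_Σ(Y)) one has Γ ⊢ φ if and only if Γ ⊢' φ. -/
universe u v w

open FirstOrder FirstOrder.Language

/-- A relation between subsets and elements of `A` is `μ`-ary. -/
def KAry {A : Type*} (μ : Cardinal) (r : Set A → A → Prop) : Prop :=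
  ∀ (Γ : Set A) (φ : A), r Γ φ → ∃ Γ' ⊆ Γ, Cardinal.mk ↥Γ' < μ ∧ r Γ' φ

/-- `r` is a logic on `Fm_Σ(W)`: reflexive, monotone, satisfying cut, structural. -/
def IsLogicOn {L : FirstOrder.Language} {W : Type*}
    (r : Set (L.Term W) → L.Term W → Prop) : Prop :=
  (∀ (Γ : Set (L.Term W)) (φ : L.Term W), φ ∈ Γ → r Γ φ) ∧
  (∀ (Γ Δ : Set (L.Term W)) (φ : L.Term W), Γ ⊆ Δ → r Γ φ → r Δ φ) ∧
  (∀ (Γ Δ : Set (L.Term W)) (φ : L.Term W), r Γ φ → (∀ ψ ∈ Γ, r Δ ψ) → r Δ φ) ∧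
  (∀ (σ : W → L.Term W) (Γ : Set (L.Term W)) (φ : L.Term W),
      r Γ φ → r ((fun t : L.Term W => t.subst σ) '' Γ) (φ.subst σ))

section Aux

variable {L : FirstOrder.Language} {α β γ : Type*}

lemma my_subst_subst (t : L.Term α) (σ : α → L.Term β) (τ : β → L.Term γ) :
    (t.subst σ).subst τ = t.subst (fun a => (σ a).subst τ) := by
  induction t with
  | var a => rfl
  | func f ts ih => simp [Term.subst, ih]

lemma my_relabel_subst (g : α → β) (t : L.Term α) (σ : β → L.Term γ) :
    (t.relabel g).subst σ = t.subst (σ ∘ g) := by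
  induction t with
  | var a => rfl
  | func f ts ih => simp [Term.subst, Term.relabel, ih]

lemma my_subst_var (t : L.Term α) : t.subst Term.var = t := by
  induction t with
  | var a => rfl
  | func f ts ih => simp [Term.subst, ih]

lemma my_relabel_eq_subst (g : α → β) (t : L.Term α) :
    t.relabel g = t.subst (Term.var ∘ g) := by
  induction t with
  | var a => rfl
  | func f ts ih => simp [Term.subst, Term.relabel, ih]

end Aux

/-- let κ be regular, `X ⊆ Y` infinite and `l = (Fm_Σ(X), ⊢)` a logic
of cardinality κ. Then there exists a natural extension of `l` to `Fm_Σ(Y)`: a logic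
`r'` on `Fm_Σ(Y)` of cardinality κ which is a conservative extension of `l`. -/
theorem stmt_11 {L : FirstOrder.Language.{u, v}} {X Y : Type w}
    [Infinite X] [Infinite Y]
    (em : X → Y) (hem : Function.Injective em)
    (κ : Cardinal.{max u w}) (hκ : κ.IsRegular)
    (r : Set (L.Term X) → L.Term X → Prop) (hlogic : IsLogicOn r)
    (hκary : KAry κ r)
    (hleast : ∀ μ : Cardinal.{max u w}, Cardinal.aleph0 ≤ μ → KAry μ r → κ ≤ μ) :
    ∃ r' : Set (L.Term Y) → L.Term Y → Prop,
      IsLogicOn r' ∧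
      -- cardinality of r' is exactly κ
      KAry κ r' ∧
      (∀ μ : Cardinal.{max u w}, Cardinal.aleph0 ≤ μ → KAry μ r' → κ ≤ μ) ∧
      -- r' is a conservative extension of r
      (∀ (Γ : Set (L.Term X)) (φ : L.Term X),
          r Γ φ ↔ r' (Term.relabel em '' Γ) (Term.relabel em φ)) := by
  obtain ⟨href, hmono, hcut, hstr⟩ := hlogic
  -- a retraction ρ : Y → L.Term X with ρ (em x) = var x
  have hX : Nonempty X := inferInstance
  obtain ⟨x₀⟩ := hX
  classical
  set ρ : Y → L.Term X := fun y =>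
    if h : ∃ x, em x = y then Term.var h.choose else Term.var x₀ with hρ
  have hρem : ∀ x : X, ρ (em x) = Term.var x := by
    intro x
    have h : ∃ x', em x' = em x := ⟨x, rfl⟩
    simp only [hρ, dif_pos h]
    exact congrArg Term.var (hem h.choose_spec)
  have hret : ∀ t : L.Term X, (t.relabel em).subst ρ = t := by
    intro t
    rw [my_relabel_subst]
    have : (ρ ∘ em) = Term.var := funext hρem
    rw [this, my_subst_var]
  -- the natural extension
  set r' : Set (L.Term Y) → L.Term Y → Prop := fun Δ ψ =>
    ∃ Δ₀ ⊆ Δ, Cardinal.mk ↥Δ₀ < κ ∧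
      ∀ σ : Y → L.Term X, r ((fun t : L.Term Y => t.subst σ) '' Δ₀) (ψ.subst σ)
    with hr'
  -- conservativity, forward direction
  have hcons₁ : ∀ (Γ : Set (L.Term X)) (φ : L.Term X),
      r Γ φ → r' (Term.relabel em '' Γ) (Term.relabel em φ) := by
    intro Γ φ h
    obtain ⟨Γ', hΓ'sub, hΓ'card, hΓ'r⟩ := hκary Γ φ h
    refine ⟨Term.relabel em '' Γ', Set.image_mono hΓ'sub, ?_, ?_⟩
    · exact lt_of_le_of_lt Cardinal.mk_image_le hΓ'card
    · intro σ
      have := hstr (σ ∘ em) Γ' φ hΓ'r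
      have himg : (fun t : L.Term X => t.subst (σ ∘ em)) '' Γ' =
          (fun t : L.Term Y => t.subst σ) '' (Term.relabel em '' Γ') := by
        rw [Set.image_image]
        apply Set.image_congr
        intro t _
        rw [my_relabel_subst]
      have hφ : φ.subst (σ ∘ em) = (φ.relabel em).subst σ := (my_relabel_subst em φ σ).symm
      rw [himg, hφ] at this
      exact this
  -- conservativity, backward direction
  have hcons₂ : ∀ (Γ : Set (L.Term X)) (φ : L.Term X),
      r' (Term.relabel em '' Γ) (Term.relabel em φ) → r Γ φ := by
    intro Γ φ ⟨Δ₀, hΔ₀sub, _, hΔ₀r⟩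
    have h := hΔ₀r ρ
    rw [hret] at h
    refine hmono _ Γ _ ?_ h
    rintro _ ⟨t, htΔ₀, rfl⟩
    obtain ⟨s, hsΓ, rfl⟩ := hΔ₀sub htΔ₀
    show (Term.relabel em s).subst ρ ∈ Γ
    rw [hret]
    exact hsΓ
  refine ⟨r', ⟨?_, ?_, ?_, ?_⟩, ?_, ?_, fun Γ φ => ⟨hcons₁ Γ φ, hcons₂ Γ φ⟩⟩
  · -- reflexivity
    intro Γ φ hφ
    refine ⟨{φ}, Set.singleton_subset_iff.2 hφ, ?_, ?_⟩
    · simpa using (Cardinal.one_lt_aleph0.trans_le hκ.aleph0_le)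
    · intro σ
      exact href _ _ ⟨φ, rfl, rfl⟩
  · -- monotonicity
    rintro Γ Δ φ hΓΔ ⟨Δ₀, hsub, hcard, hr₀⟩
    exact ⟨Δ₀, hsub.trans hΓΔ, hcard, hr₀⟩
  · -- cut
    rintro Γ Δ φ ⟨Γ₀, hΓ₀sub, hΓ₀card, hΓ₀r⟩ hprem
    -- for each ψ ∈ Γ₀, r' Δ ψ; choose witnesses
    choose Δψ hΔψsub hΔψcard hΔψr using fun (ψ : ↥Γ₀) => hprem ψ (hΓ₀sub ψ.2)
    refine ⟨⋃ ψ : ↥Γ₀, Δψ ψ, Set.iUnion_subset fun ψ => hΔψsub ψ, ?_, ?_⟩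
    · calc Cardinal.mk ↥(⋃ ψ : ↥Γ₀, Δψ ψ) ≤ Cardinal.sum fun ψ => Cardinal.mk ↥(Δψ ψ) :=
            Cardinal.mk_iUnion_le_sum_mk
        _ < κ := Cardinal.sum_lt_of_isRegular hκ hΓ₀card hΔψcard
    · intro σ
      refine hcut ((fun t : L.Term Y => t.subst σ) '' Γ₀) _ _ (hΓ₀r σ) ?_
      rintro _ ⟨ψ, hψ, rfl⟩
      refine hmono _ _ _ ?_ (hΔψr ⟨ψ, hψ⟩ σ)
      exact Set.image_mono (Set.subset_iUnion (fun χ : ↥Γ₀ => Δψ χ) ⟨ψ, hψ⟩)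
  · -- structurality
    rintro τ Γ φ ⟨Δ₀, hsub, hcard, hr₀⟩
    refine ⟨(fun t : L.Term Y => t.subst τ) '' Δ₀, Set.image_mono hsub,
      lt_of_le_of_lt Cardinal.mk_image_le hcard, ?_⟩
    intro σ
    have := hr₀ (fun y => (τ y).subst σ)
    have himg : (fun t : L.Term Y => t.subst fun y => (τ y).subst σ) '' Δ₀ =
        (fun t : L.Term Y => t.subst σ) '' ((fun t : L.Term Y => t.subst τ) '' Δ₀) := by
      rw [Set.image_image]
      apply Set.image_congr
      intro t _
      rw [my_subst_subst]
    rw [himg, ← my_subst_subst] at this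
    exact this
  · -- r' is κ-ary
    rintro Γ φ ⟨Δ₀, hsub, hcard, hr₀⟩
    exact ⟨Δ₀, hsub, hcard, Δ₀, subset_rfl, hcard, hr₀⟩
  · -- κ is least
    intro μ hμ hμary
    refine hleast μ hμ ?_
    intro Γ φ h
    obtain ⟨Δ', hΔ'sub, hΔ'card, hΔ'r⟩ := hμary _ _ (hcons₁ Γ φ h)
    -- Δ' ⊆ relabel em '' Γ, so Δ' = relabel em '' Γ'' for some Γ'' ⊆ Γ
    set Γ'' : Set (L.Term X) := {t | t ∈ Γ ∧ Term.relabel em t ∈ Δ'} with hΓ''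
    have hΔ'eq : Δ' = Term.relabel em '' Γ'' := by
      apply Set.Subset.antisymm
      · intro s hs
        obtain ⟨t, htΓ, rfl⟩ := hΔ'sub hs
        exact ⟨t, ⟨htΓ, hs⟩, rfl⟩
      · rintro _ ⟨t, ⟨_, ht⟩, rfl⟩
        exact ht
    refine ⟨Γ'', fun t ht => ht.1, ?_, ?_⟩
    · -- |Γ''| ≤ |Δ'| since relabel em is injective on Γ''
      have hinj : Function.Injective (Term.relabel em : L.Term X → L.Term Y) := by
        obtain ⟨g, hg⟩ := hem.hasLeftInverse
        refine Function.LeftInverse.injective (g := Term.relabel g) ?_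
        intro t
        rw [Term.relabel_relabel]
        have : (g ∘ em) = id := funext hg
        rw [this, Term.relabel_id]
      calc Cardinal.mk ↥Γ'' = Cardinal.mk ↥(Term.relabel em '' Γ'') :=
            (Cardinal.mk_image_eq_of_injOn _ _ (hinj.injOn)).symm
        _ = Cardinal.mk ↥Δ' := by rw [hΔ'eq]
        _ < μ := hΔ'card
    · apply hcons₂
      rwa [hΔ'eq] at hΔ'r
end

section
/- Let X ⊆ Y be infinite sets and l = (Fm_Σ(X), ⊢) a logic of regular cardinality κ. Then the set NatExt_Y(l) of natural extensions of l to Fm_Σ(Y), partially ordered by deductive strength (⊢₁ ≤ ⊢₂ iff Γ ⊢₁ φ implies Γ ⊢₂ φ for all Γ, φ), is a complete lattice: every subset S ⊆ NatExt_Y(l) has a least upper bound and a greatest lower bound within NatExt_Y(l). -/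
universe u v w

open FirstOrder FirstOrder.Language

/-- `r'` is a natural extension of `r` to `Fm_Σ(Y)` (via the inclusion `em`):
a logic on `Fm_Σ(Y)` which is a conservative extension of `r` and has the same
cardinality as `r`. -/
def IsNatExt {L : FirstOrder.Language.{u, v}} {X Y : Type w} (em : X → Y)
    (r : Set (L.Term X) → L.Term X → Prop)
    (r' : Set (L.Term Y) → L.Term Y → Prop) : Prop :=
  IsLogicOn r' ∧
  (∀ (Γ : Set (L.Term X)) (φ : L.Term X),
      r Γ φ ↔ r' (Term.relabel em '' Γ) (Term.relabel em φ)) ∧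
  (∀ μ : Cardinal.{max u w}, Cardinal.aleph0 ≤ μ → (KAry μ r ↔ KAry μ r'))

/-- Deductive strength order on relations. -/
def RelLe {A : Type*} (r₁ r₂ : Set A → A → Prop) : Prop :=
  ∀ (Γ : Set A) (φ : A), r₁ Γ φ → r₂ Γ φ

/-!
The natural extensions of a logic `l` of cardinality `κ` are exactly the `κ`-ary logics on
`Fm_Σ(Y)` that are conservative over `l`: a conservative extension is at least as large in
cardinality as `l`, and being `κ`-ary it is no larger. Conservative logics are closed under
arbitrary nonempty intersections, and the family always contains the greatest one, in which
`Γ ⊢ φ` holds iff every substitution of `Fm_Σ(X)`-formulas for the variables turns it into an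
`l`-consequence. The `κ`-ary part of a logic (`Γ ⊢ φ` iff some `Γ' ⊆ Γ` of size `< κ` proves
`φ`) is again a logic because `κ` is regular, so the `κ`-ary part of the intersection of a
family with the greatest conservative logic is the meet of the family among natural
extensions. Joins are then meets of sets of upper bounds.
-/

theorem exists_isLeast_upperBounds_inter {α : Type*} [LE α] {P : Set α}
    (h : ∀ S ⊆ P, ∃ i, IsGreatest (lowerBounds S ∩ P) i) {S : Set α} (hS : S ⊆ P) :
    ∃ s, IsLeast (upperBounds S ∩ P) s := by
  obtain ⟨i, ⟨hi_lower, hiP⟩, hi_greatest⟩ := h (upperBounds S ∩ P) Set.inter_subset_right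
  exact ⟨i, ⟨fun x hx => hi_greatest ⟨fun t ht => ht.1 hx, hS hx⟩, hiP⟩,
    fun t ht => hi_lower ht⟩

namespace FirstOrder.Language.Term

variable {L : FirstOrder.Language} {α β γ : Type*}

theorem subst_var (t : L.Term α) : t.subst var = t := by
  induction t with
  | var => rfl
  | func f ts ih => simp [ih]

theorem subst_subst (σ : α → L.Term β) (τ : β → L.Term γ) (t : L.Term α) :
    (t.subst σ).subst τ = t.subst fun a => (σ a).subst τ := by
  induction t with
  | var => rfl
  | func f ts ih => simp [ih]

theorem relabel_eq_subst (g : α → β) (t : L.Term α) : t.relabel g = t.subst (var ∘ g) := by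
  induction t with
  | var => rfl
  | func f ts ih => simp [ih]

theorem subst_relabel (g : α → β) (σ : β → L.Term γ) (t : L.Term α) :
    (t.relabel g).subst σ = t.subst (σ ∘ g) := by
  rw [relabel_eq_subst, subst_subst]
  rfl

theorem relabel_subst (σ : α → L.Term β) (g : β → γ) (t : L.Term α) :
    (t.subst σ).relabel g = t.subst fun a => (σ a).relabel g := by
  simp only [relabel_eq_subst, subst_subst]

theorem subst_relabel_invFun [Nonempty α] {g : α → β} (hg : Function.Injective g)
    (t : L.Term α) : (t.relabel g).subst (var ∘ Function.invFun g) = t := by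
  rw [subst_relabel, Function.comp_assoc, (Function.leftInverse_invFun hg).comp_eq_id,
    Function.comp_id, subst_var]

theorem relabel_injective [Nonempty α] {g : α → β} (hg : Function.Injective g) :
    Function.Injective (relabel g : L.Term α → L.Term β) :=
  fun t₁ t₂ h => by rw [← subst_relabel_invFun hg t₁, h, subst_relabel_invFun hg]

end FirstOrder.Language.Term

section KAry

variable {A : Type*} {κ μ : Cardinal} {r s : Set A → A → Prop}

theorem KAry.mono (h : KAry κ r) (hκμ : κ ≤ μ) : KAry μ r := fun Γ φ hΓ =>
  let ⟨Γ', hΓ'Γ, hΓ'κ, hΓ'⟩ := h Γ φ hΓ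
  ⟨Γ', hΓ'Γ, hΓ'κ.trans_le hκμ, hΓ'⟩

def karyPart (κ : Cardinal) (r : Set A → A → Prop) : Set A → A → Prop :=
  fun Γ φ => ∃ Γ' ⊆ Γ, Cardinal.mk Γ' < κ ∧ r Γ' φ

theorem kAry_karyPart : KAry κ (karyPart κ r) := by
  rintro Γ φ ⟨Γ', hΓ'Γ, hΓ'κ, hΓ'⟩
  exact ⟨Γ', hΓ'Γ, hΓ'κ, Γ', subset_rfl, hΓ'κ, hΓ'⟩

theorem karyPart_le (hr : Monotone r) : karyPart κ r ≤ r := by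
  rintro Γ φ ⟨Γ', hΓ'Γ, -, hΓ'⟩
  exact hr hΓ'Γ φ hΓ'

theorem le_karyPart (hr : KAry κ r) : r ≤ karyPart κ r :=
  fun Γ φ hΓ => hr Γ φ hΓ

theorem karyPart_mono (hrs : r ≤ s) : karyPart κ r ≤ karyPart κ s := by
  rintro Γ φ ⟨Γ', hΓ'Γ, hΓ'κ, hΓ'⟩
  exact ⟨Γ', hΓ'Γ, hΓ'κ, hrs Γ' φ hΓ'⟩

end KAry

namespace IsLogicOn

variable {L : FirstOrder.Language} {W : Type*} {r : Set (L.Term W) → L.Term W → Prop}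

theorem refl (h : IsLogicOn r) {Γ : Set (L.Term W)} {φ : L.Term W} (hφ : φ ∈ Γ) : r Γ φ :=
  h.1 Γ φ hφ

theorem monotone (h : IsLogicOn r) : Monotone r :=
  fun Γ Δ hΓΔ φ => h.2.1 Γ Δ φ hΓΔ

theorem cut (h : IsLogicOn r) {Γ Δ : Set (L.Term W)} {φ : L.Term W} (hΓ : r Γ φ)
    (hΔ : ∀ ψ ∈ Γ, r Δ ψ) : r Δ φ :=
  h.2.2.1 Γ Δ φ hΓ hΔ

theorem subst (h : IsLogicOn r) (σ : W → L.Term W) {Γ : Set (L.Term W)} {φ : L.Term W}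
    (hΓ : r Γ φ) : r ((fun t => t.subst σ) '' Γ) (φ.subst σ) :=
  h.2.2.2 σ Γ φ hΓ

theorem karyPart {κ : Cardinal} (hκ : κ.IsRegular) (h : IsLogicOn r) :
    IsLogicOn (karyPart κ r) := by
  refine ⟨fun Γ φ hφ => ?_, fun Γ Δ φ hΓΔ => ?_, fun Γ Δ φ hΓ hΔ => ?_, fun σ Γ φ hΓ => ?_⟩
  · refine ⟨{φ}, Set.singleton_subset_iff.2 hφ, ?_, h.refl rfl⟩
    rw [Cardinal.mk_singleton]
    exact Cardinal.one_lt_aleph0.trans_le hκ.aleph0_le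
  · rintro ⟨Γ', hΓ'Γ, hΓ'κ, hΓ'⟩
    exact ⟨Γ', hΓ'Γ.trans hΓΔ, hΓ'κ, hΓ'⟩
  · obtain ⟨Γ', hΓ'Γ, hΓ'κ, hΓ'⟩ := hΓ
    choose Δ' hΔ'Δ hΔ'κ hΔ' using fun ψ (hψ : ψ ∈ Γ') => hΔ ψ (hΓ'Γ hψ)
    -- regularity of `κ`: fewer than `κ` sets of size `< κ` have a union of size `< κ`
    refine ⟨⋃ ψ : Γ', Δ' ψ ψ.2, Set.iUnion_subset fun ψ => hΔ'Δ ψ ψ.2,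
      Cardinal.mk_iUnion_le_sum_mk.trans_lt
        (Cardinal.sum_lt_of_isRegular hκ hΓ'κ fun ψ => hΔ'κ ψ ψ.2), ?_⟩
    exact h.cut hΓ' fun ψ hψ =>
      h.monotone (Set.subset_iUnion (fun ψ : Γ' => Δ' ψ ψ.2) ⟨ψ, hψ⟩) ψ (hΔ' ψ hψ)
  · obtain ⟨Γ', hΓ'Γ, hΓ'κ, hΓ'⟩ := hΓ
    exact ⟨_, Set.image_mono hΓ'Γ, Cardinal.mk_image_le.trans_lt hΓ'κ, h.subst σ hΓ'⟩

end IsLogicOn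

theorem isLogicOn_sInf {L : FirstOrder.Language} {W : Type*}
    {S : Set (Set (L.Term W) → L.Term W → Prop)} (hS : ∀ r ∈ S, IsLogicOn r) :
    IsLogicOn (sInf S) := by
  simp only [IsLogicOn, sInf_apply, iInf_apply, iInf_Prop_eq, Subtype.forall]
  refine ⟨fun Γ φ hφ r hr => (hS r hr).refl hφ,
    fun Γ Δ φ hΓΔ hΓ r hr => (hS r hr).monotone hΓΔ φ (hΓ r hr),
    fun Γ Δ φ hΓ hΔ r hr => (hS r hr).cut (hΓ r hr) fun ψ hψ => hΔ ψ hψ r hr,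
    fun σ Γ φ hΓ r hr => (hS r hr).subst σ (hΓ r hr)⟩

section Conservative

variable {L : FirstOrder.Language.{u, v}} {X Y : Type w} {em : X → Y}
  {r : Set (L.Term X) → L.Term X → Prop}

def IsConservative (em : X → Y) (r : Set (L.Term X) → L.Term X → Prop)
    (r' : Set (L.Term Y) → L.Term Y → Prop) : Prop :=
  ∀ (Γ : Set (L.Term X)) (φ : L.Term X),
    r Γ φ ↔ r' (Term.relabel em '' Γ) (Term.relabel em φ)

theorem IsConservative.karyPart {κ : Cardinal} {r' : Set (L.Term Y) → L.Term Y → Prop}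
    (h : IsConservative em r r') (hr' : Monotone r') (hr : KAry κ r) :
    IsConservative em r (karyPart κ r') := by
  refine fun Γ φ => ⟨fun hΓ => ?_, fun ⟨Γ', hΓ'Γ, _, hΓ'⟩ => (h Γ φ).2 (hr' hΓ'Γ _ hΓ')⟩
  obtain ⟨Γ₀, hΓ₀Γ, hΓ₀κ, hΓ₀⟩ := hr Γ φ hΓ
  exact ⟨_, Set.image_mono hΓ₀Γ, Cardinal.mk_image_le.trans_lt hΓ₀κ, (h Γ₀ φ).1 hΓ₀⟩

theorem isConservative_sInf {S : Set (Set (L.Term Y) → L.Term Y → Prop)} (hne : S.Nonempty)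
    (hS : ∀ r' ∈ S, IsConservative em r r') : IsConservative em r (sInf S) := by
  obtain ⟨r₀, hr₀⟩ := hne
  simp only [IsConservative, sInf_apply, iInf_apply, iInf_Prop_eq, Subtype.forall]
  exact fun Γ φ =>
    ⟨fun hΓ r' hr' => (hS r' hr' Γ φ).1 hΓ, fun hΓ => (hS r₀ hr₀ Γ φ).2 (hΓ r₀ hr₀)⟩

theorem KAry.of_isConservative [Nonempty X] {μ : Cardinal}
    {r' : Set (L.Term Y) → L.Term Y → Prop} (hem : Function.Injective em)
    (h : IsConservative em r r') (hr' : KAry μ r') : KAry μ r := by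
  intro Γ φ hΓ
  obtain ⟨Γ', hΓ'Γ, hΓ'μ, hΓ'⟩ := hr' _ _ ((h Γ φ).1 hΓ)
  have hinj := Term.relabel_injective (L := L) hem
  refine ⟨Term.relabel em ⁻¹' Γ', ?_,
    (Cardinal.mk_preimage_of_injective _ _ hinj).trans_lt hΓ'μ, ?_⟩
  · simpa only [Set.preimage_image_eq _ hinj]
      using Set.preimage_mono (f := Term.relabel em) hΓ'Γ
  · rwa [h, Set.image_preimage_eq_of_subset (hΓ'Γ.trans (Set.image_subset_range _ _))]

def maxExt (r : Set (L.Term X) → L.Term X → Prop) : Set (L.Term Y) → L.Term Y → Prop :=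
  fun Γ φ => ∀ σ : Y → L.Term X, r ((fun t => t.subst σ) '' Γ) (φ.subst σ)

theorem IsLogicOn.maxExt (h : IsLogicOn r) :
    IsLogicOn (maxExt r : Set (L.Term Y) → L.Term Y → Prop) := by
  refine ⟨fun Γ φ hφ σ => h.refl (Set.mem_image_of_mem _ hφ),
    fun Γ Δ φ hΓΔ hΓ σ => h.monotone (Set.image_mono hΓΔ) _ (hΓ σ),
    fun Γ Δ φ hΓ hΔ σ => h.cut (hΓ σ) ?_, fun τ Γ φ hΓ σ => ?_⟩
  · rintro _ ⟨ψ, hψ, rfl⟩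
    exact hΔ ψ hψ σ
  · simpa only [Set.image_image, Term.subst_subst] using hΓ fun y => (τ y).subst σ

theorem isConservative_maxExt [Nonempty X] (hem : Function.Injective em) (h : IsLogicOn r) :
    IsConservative em r (maxExt r) := by
  refine fun Γ φ => ⟨fun hΓ σ => ?_, fun hΓ => ?_⟩
  · simpa only [Set.image_image, Term.subst_relabel] using h.subst (σ ∘ em) hΓ
  · simpa only [Set.image_image, Term.subst_relabel_invFun hem, Set.image_id']
      using hΓ (Term.var ∘ Function.invFun em)

theorem le_maxExt {r' : Set (L.Term Y) → L.Term Y → Prop} (hr' : IsLogicOn r')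
    (h : IsConservative em r r') : r' ≤ maxExt r := by
  intro Γ φ hΓ σ
  rw [h]
  simpa only [Set.image_image, Term.relabel_subst]
    using hr'.subst (fun y => (σ y).relabel em) hΓ

end Conservative

section NatExt

variable {L : FirstOrder.Language.{u, v}} {X Y : Type w} [Nonempty X] {em : X → Y}
  {κ : Cardinal.{max u w}} {r : Set (L.Term X) → L.Term X → Prop}

theorem isNatExt_of_kAry (hem : Function.Injective em)
    (hleast : ∀ μ : Cardinal.{max u w}, Cardinal.aleph0 ≤ μ → KAry μ r → κ ≤ μ)
    {r' : Set (L.Term Y) → L.Term Y → Prop} (hr' : IsLogicOn r') (h : IsConservative em r r')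
    (hκ : KAry κ r') : IsNatExt em r r' :=
  ⟨hr', h, fun μ hμ => ⟨fun hμr => hκ.mono (hleast μ hμ hμr), KAry.of_isConservative hem h⟩⟩

theorem exists_isGreatest_lowerBounds_natExt (hem : Function.Injective em)
    (hκ : κ.IsRegular) (hr : IsLogicOn r) (hκr : KAry κ r)
    (hleast : ∀ μ : Cardinal.{max u w}, Cardinal.aleph0 ≤ μ → KAry μ r → κ ≤ μ)
    {S : Set (Set (L.Term Y) → L.Term Y → Prop)} (hS : S ⊆ {r' | IsNatExt em r r'}) :
    ∃ ri, IsGreatest (lowerBounds S ∩ {r' | IsNatExt em r r'}) ri := by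
  set M := sInf (insert (maxExt r) S)
  have hM : IsLogicOn M := isLogicOn_sInf <| by
    rintro r' (rfl | hr')
    exacts [hr.maxExt, (hS hr').1]
  have hMr : IsConservative em r M := isConservative_sInf (Set.insert_nonempty _ _) <| by
    rintro r' (rfl | hr')
    exacts [isConservative_maxExt hem hr, (hS hr').2.1]
  refine ⟨karyPart κ M, ⟨fun r' hr' => ?_, ?_⟩, ?_⟩
  · exact (karyPart_le hM.monotone).trans (sInf_le (Set.mem_insert_of_mem _ hr'))
  · exact isNatExt_of_kAry hem hleast (hM.karyPart hκ) (hMr.karyPart hM.monotone hκr)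
      kAry_karyPart
  · rintro rt ⟨hrt_lower, hrt⟩
    have hrt_le : rt ≤ M := le_sInf <| by
      rintro r' (rfl | hr')
      exacts [le_maxExt hrt.1 hrt.2.1, hrt_lower hr']
    exact (le_karyPart ((hrt.2.2 κ hκ.aleph0_le).1 hκr)).trans (karyPart_mono hrt_le)

end NatExt

theorem stmt_19_general {L : FirstOrder.Language.{u, v}} {X Y : Type w}
    [Infinite X]
    (em : X → Y) (hem : Function.Injective em)
    (κ : Cardinal.{max u w}) (hκ : κ.IsRegular)
    (r : Set (L.Term X) → L.Term X → Prop) (hlogic : IsLogicOn r)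
    (hκary : KAry κ r)
    (hleast : ∀ μ : Cardinal.{max u w}, Cardinal.aleph0 ≤ μ → KAry μ r → κ ≤ μ) :
    ∀ S : Set (Set (L.Term Y) → L.Term Y → Prop),
      (∀ r' ∈ S, IsNatExt em r r') →
      -- least upper bound
      (∃ rs, IsNatExt em r rs ∧ (∀ r' ∈ S, RelLe r' rs) ∧
          ∀ rt, IsNatExt em r rt → (∀ r' ∈ S, RelLe r' rt) → RelLe rs rt) ∧
      -- greatest lower bound
      (∃ ri, IsNatExt em r ri ∧ (∀ r' ∈ S, RelLe ri r') ∧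
          ∀ rt, IsNatExt em r rt → (∀ r' ∈ S, RelLe rt r') → RelLe rt ri) := by
  intro S hS
  have hglb : ∀ T ⊆ {r' | IsNatExt em r r'},
      ∃ ri, IsGreatest (lowerBounds T ∩ {r' | IsNatExt em r r'}) ri :=
    fun T hT => exists_isGreatest_lowerBounds_natExt hem hκ hlogic hκary hleast hT
  obtain ⟨rs, ⟨hrs_upper, hrs⟩, hrs_least⟩ := exists_isLeast_upperBounds_inter hglb hS
  obtain ⟨ri, ⟨hri_lower, hri⟩, hri_greatest⟩ := hglb S hS
  exact ⟨⟨rs, hrs, fun r' hr' => hrs_upper hr', fun rt hrt hub => hrs_least ⟨hub, hrt⟩⟩,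
    ⟨ri, hri, fun r' hr' => hri_lower hr', fun rt hrt hlb => hri_greatest ⟨hlb, hrt⟩⟩⟩

/-- Corollary `natextlattice`: for a logic `l` of regular cardinality
κ, the set of natural extensions of `l` to `Fm_Σ(Y)`, ordered by deductive strength,
is a complete lattice: every subset has a least upper bound and a greatest lower
bound within the set of natural extensions. -/
theorem stmt_19 {L : FirstOrder.Language.{u, v}} {X Y : Type w}
    [Infinite X] [Infinite Y]
    (em : X → Y) (hem : Function.Injective em)
    (κ : Cardinal.{max u w}) (hκ : κ.IsRegular)
    (r : Set (L.Term X) → L.Term X → Prop) (hlogic : IsLogicOn r)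
    (hκary : KAry κ r)
    (hleast : ∀ μ : Cardinal.{max u w}, Cardinal.aleph0 ≤ μ → KAry μ r → κ ≤ μ) :
    ∀ S : Set (Set (L.Term Y) → L.Term Y → Prop),
      (∀ r' ∈ S, IsNatExt em r r') →
      -- least upper bound
      (∃ rs, IsNatExt em r rs ∧ (∀ r' ∈ S, RelLe r' rs) ∧
          ∀ rt, IsNatExt em r rt → (∀ r' ∈ S, RelLe r' rt) → RelLe rs rt) ∧
      -- greatest lower bound
      (∃ ri, IsNatExt em r ri ∧ (∀ r' ∈ S, RelLe ri r') ∧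
          ∀ rt, IsNatExt em r rt → (∀ r' ∈ S, RelLe rt r') → RelLe rt ri) :=
  stmt_19_general em hem κ hκ r hlogic hκary hleast
end
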